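/- arXiv:1204.3212 — 2 statements merged into one kernel-verified Lean document; each statement's English description precedes it below -/
import Mathlib

section
/- Fix λ > 0. The prediction map y ↦ μ_λ(y) is C^∞ on the open set ℝ^Q ∖ H_{·,λ}. More precisely, for every y ∉ H_{·,λ}, choosing a solution x⋆ of (P_λ(y)) whose D-cosupport J satisfies (H_J), there is an open neighborhood of y on which ȳ ↦ μ_λ(ȳ) coincides with the affine map ȳ ↦ μ_λ(y) + Φ A^[J] Φ*(ȳ − y); in particular the Jacobian of μ_λ at y equals Φ A^[J] Φ*. -/
open Matrix MeasureTheory ProbabilityTheory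

/-- The analysis lasso objective `L_{y,λ}(x) = (1/2)‖y − Φx‖₂² + λ‖D*x‖₁`. -/
noncomputable def lassoObj {N Q P : ℕ} (Φ : Matrix (Fin Q) (Fin N) ℝ)
    (D : Matrix (Fin N) (Fin P) ℝ) (y : Fin Q → ℝ) (lam : ℝ) (x : Fin N → ℝ) : ℝ :=
  (1 / 2) * ∑ i, (y i - Φ.mulVec x i) ^ 2 + lam * ∑ j, |Dᵀ.mulVec x j|

/-- `x` is a solution of `(P_λ(y))`, i.e. a global minimizer of the lasso objective. -/
def IsLassoSol {N Q P : ℕ} (Φ : Matrix (Fin Q) (Fin N) ℝ)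
    (D : Matrix (Fin N) (Fin P) ℝ) (y : Fin Q → ℝ) (lam : ℝ) (x : Fin N → ℝ) : Prop :=
  ∀ x' : Fin N → ℝ, lassoObj Φ D y lam x ≤ lassoObj Φ D y lam x'

/-- The cospace `G_J = Ker D_J^*`. -/
def GJ {N P : ℕ} (D : Matrix (Fin N) (Fin P) ℝ) (J : Set (Fin P)) :
    Submodule ℝ (Fin N → ℝ) where
  carrier := {x | ∀ j ∈ J, Dᵀ.mulVec x j = 0}
  add_mem' := by
    intro a b ha hb j hj
    simp [Matrix.mulVec_add, ha j hj, hb j hj]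
  zero_mem' := by intro j hj; simp
  smul_mem' := by
    intro c a ha j hj
    simp [Matrix.mulVec_smul, ha j hj]


namespace LassoAux

open Matrix Set

/-! ### Scalar helpers -/

theorem abs_add_eq {a c : ℝ} (h : |c| ≤ |a|) :
    |a + c| = |a| + c * (if 0 ≤ a then 1 else -1) := by
  rcases le_or_gt 0 a with ha | ha
  · rw [if_pos ha, mul_one, abs_of_nonneg ha, abs_of_nonneg (by cases abs_cases c <;> linarith [abs_of_nonneg ha])]
  · rw [if_neg (not_le.2 ha), abs_of_neg ha, abs_of_nonpos (by cases abs_cases c <;> linarith [abs_of_neg ha])]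
    ring

theorem sign_mul_eq {u a c : ℝ} (hu : u * a = |a|) (ha : a ≠ 0) (h : |c| ≤ |a|) :
    u * (a + c) = |a + c| := by
  rcases lt_or_gt_of_ne ha with ha' | ha'
  · have hu1 : u = -1 := by
      have h2 : u * a = -1 * a := by rw [hu, abs_of_neg ha']; ring
      exact mul_right_cancel₀ ha h2
    rw [hu1, abs_of_nonpos (by cases abs_cases c <;> linarith [abs_of_neg ha'])]; ring
  · have hu1 : u = 1 := by
      have h2 : u * a = 1 * a := by rw [hu, abs_of_pos ha']; ring
      exact mul_right_cancel₀ ha h2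
    rw [hu1, abs_of_nonneg (by cases abs_cases c <;> linarith [abs_of_pos ha'])]; ring

/-- a positive lower bound valid on a (finite) index type -/
theorem exists_pos_le {P : ℕ} (cond : Fin P → Prop) (f : Fin P → ℝ)
    (h : ∀ i, cond i → 0 < f i) : ∃ δ : ℝ, 0 < δ ∧ ∀ i, cond i → δ ≤ f i := by
  classical
  rcases (Finset.univ.filter fun i => cond i).eq_empty_or_nonempty with he | hne
  · exact ⟨1, one_pos, fun i hi => absurd (Finset.mem_filter.2 ⟨Finset.mem_univ i, hi⟩)
      (by simp [he])⟩
  · refine ⟨(Finset.univ.filter fun i => cond i).inf' hne f, ?_, fun i hi => ?_⟩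
    · rw [Finset.lt_inf'_iff]
      exact fun i hi => h i (Finset.mem_filter.1 hi).2
    · exact Finset.inf'_le f (Finset.mem_filter.2 ⟨Finset.mem_univ i, hi⟩)

/-! ### Matrix helpers -/

theorem dot_transpose {m n : ℕ} (M : Matrix (Fin m) (Fin n) ℝ) (c : Fin n → ℝ) (z : Fin m → ℝ) :
    c ⬝ᵥ Mᵀ.mulVec z = M.mulVec c ⬝ᵥ z := by
  simp only [Matrix.mulVec, Matrix.vecMul, dotProduct, Matrix.transpose_apply,
    Finset.mul_sum, Finset.sum_mul]
  rw [Finset.sum_comm]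
  apply Finset.sum_congr rfl; intro j _; apply Finset.sum_congr rfl; intro i _; ring

theorem mulVec_eq_sum_cols {m n : ℕ} (M : Matrix (Fin m) (Fin n) ℝ) (v : Fin n → ℝ) :
    M.mulVec v = ∑ k, v k • (fun i => M i k) := by
  funext i
  simp [Matrix.mulVec, dotProduct, mul_comm]

theorem mulVec_bound {m n : ℕ} (M : Matrix (Fin m) (Fin n) ℝ) :
    ∃ C : ℝ, 0 ≤ C ∧ ∀ (z : Fin n → ℝ) (i : Fin m), |M.mulVec z i| ≤ C * ‖z‖ := by
  refine ⟨∑ i, ∑ j, |M i j|, by positivity, fun z i => ?_⟩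
  have he : M.mulVec z i = ∑ j, M i j * z j := rfl
  have h1 : |M.mulVec z i| ≤ ∑ j, |M i j| * ‖z‖ := by
    rw [he]
    refine (Finset.abs_sum_le_sum_abs (fun j => M i j * z j) Finset.univ).trans
      (Finset.sum_le_sum fun j _ => ?_)
    rw [abs_mul]
    exact mul_le_mul_of_nonneg_left (by simpa [Real.norm_eq_abs] using norm_le_pi_norm z j)
      (abs_nonneg _)
  refine h1.trans ?_
  rw [← Finset.sum_mul]
  refine mul_le_mul_of_nonneg_right ?_ (norm_nonneg _)
  exact Finset.single_le_sum (f := fun i => ∑ j, |M i j|) (fun i _ => by positivity)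
    (Finset.mem_univ i)

theorem continuous_mulVec {m n : ℕ} (M : Matrix (Fin m) (Fin n) ℝ) :
    Continuous fun z => M.mulVec z := by
  have := M.mulVecLin.continuous_of_finiteDimensional
  exact this

end LassoAux

/-- Condition `(H_J)`: `Ker Φ ∩ G_J = {0}`. -/
def HJcond {N Q P : ℕ} (Φ : Matrix (Fin Q) (Fin N) ℝ) (D : Matrix (Fin N) (Fin P) ℝ)
    (J : Set (Fin P)) : Prop :=
  ∀ x : Fin N → ℝ, Φ.mulVec x = 0 → x ∈ GJ D J → x = 0

/-- The columns of `U` form a basis of the subspace `G`. -/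
def ColBasis {N r : ℕ} (U : Matrix (Fin N) (Fin r) ℝ) (G : Submodule ℝ (Fin N → ℝ)) : Prop :=
  LinearIndependent ℝ (fun k : Fin r => (fun i => U i k)) ∧
  Submodule.span ℝ (Set.range (fun k : Fin r => (fun i => U i k))) = G

/-- The matrix `A^[J] = U (U* Φ* Φ U)⁻¹ U*` built from a basis matrix `U` of `G_J`. -/
noncomputable def AJmat {N Q r : ℕ} (Φ : Matrix (Fin Q) (Fin N) ℝ)
    (U : Matrix (Fin N) (Fin r) ℝ) : Matrix (Fin N) (Fin N) ℝ :=
  U * (Uᵀ * Φᵀ * Φ * U)⁻¹ * Uᵀ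

/-- Orthogonal projection onto a subspace of `Fin n → ℝ` (Euclidean inner product). -/
noncomputable def projG {n : ℕ} (G : Submodule ℝ (Fin n → ℝ)) (v : Fin n → ℝ) : Fin n → ℝ :=
  (EuclideanSpace.equiv (Fin n) ℝ)
    (Submodule.orthogonalProjectionOnto
      (G.map ((EuclideanSpace.equiv (Fin n) ℝ).symm.toLinearEquiv :
          (Fin n → ℝ) →ₗ[ℝ] EuclideanSpace ℝ (Fin n)))
      ((EuclideanSpace.equiv (Fin n) ℝ).symm v))

/-- `AJ` is a valid assignment of the matrix `A^[J]` to each `J` satisfying `(H_J)`;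
the value of `A^[J]` does not depend on the choice of basis matrix `U`. -/
def IsAJChoice {N Q P : ℕ} (Φ : Matrix (Fin Q) (Fin N) ℝ) (D : Matrix (Fin N) (Fin P) ℝ)
    (AJ : Set (Fin P) → Matrix (Fin N) (Fin N) ℝ) : Prop :=
  ∀ J : Set (Fin P), HJcond Φ D J →
    ∃ (r : ℕ) (U : Matrix (Fin N) (Fin r) ℝ), ColBasis U (GJ D J) ∧ AJ J = AJmat Φ U

/-- `Im D_S`: the span of the columns of `D` indexed by `S`, as a set of vectors. -/
def colSpan {N P : ℕ} (D : Matrix (Fin N) (Fin P) ℝ) (S : Set (Fin P)) : Set (Fin N → ℝ) :=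
  {w | ∃ v : Fin P → ℝ, (∀ i, i ∉ S → v i = 0) ∧ w = D.mulVec v}

/-- The transition space `H ⊆ ℝ^Q × ℝ₊`: union over `J` satisfying `(H_J)`, `K ⊆ J` with
`Im Π̃^[J] ⊄ Im D_{J∖K}`, and sign vectors `s` on `J^c` and `σ` on `K`, of the sets where
`Proj_{G_{J∖K}}(Π̃^[J] y) = Proj_{G_{J∖K}}(λ(C̃^[J] s_{J^c} − D_K σ_K))`. -/
noncomputable def transitionSpace {N Q P : ℕ} (Φ : Matrix (Fin Q) (Fin N) ℝ)
    (D : Matrix (Fin N) (Fin P) ℝ) (AJ : Set (Fin P) → Matrix (Fin N) (Fin N) ℝ) :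
    Set ((Fin Q → ℝ) × ℝ) :=
  {p | 0 ≤ p.2 ∧
    ∃ (J K : Set (Fin P)) (s σ : Fin P → ℝ),
      HJcond Φ D J ∧ K ⊆ J ∧
      ¬ (Set.range (Φᵀ * (Φ * AJ J * Φᵀ - 1)).mulVec ⊆ colSpan D (J \ K)) ∧
      (∀ i, i ∉ J → s i = 1 ∨ s i = -1) ∧ (∀ i ∈ J, s i = 0) ∧
      (∀ i ∈ K, σ i = 1 ∨ σ i = -1) ∧ (∀ i, i ∉ K → σ i = 0) ∧
      projG (GJ D (J \ K)) ((Φᵀ * (Φ * AJ J * Φᵀ - 1)).mulVec p.1)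
        = projG (GJ D (J \ K))
            (p.2 • ((Φᵀ * Φ * AJ J - 1).mulVec (D.mulVec s) - D.mulVec σ))}

namespace LassoAux2

open Matrix Set LassoAux

/-! ### projG lemmas -/

theorem projG_eq_of {n : ℕ} (G : Submodule ℝ (Fin n → ℝ)) {v w : Fin n → ℝ}
    (h : ∀ g ∈ G, (v - w) ⬝ᵥ g = 0) : projG G v = projG G w := by
  unfold projG
  congr 1
  have hsub : Submodule.orthogonalProjectionOnto
        (G.map ((EuclideanSpace.equiv (Fin n) ℝ).symm.toLinearEquiv :
          (Fin n → ℝ) →ₗ[ℝ] EuclideanSpace ℝ (Fin n)))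
        ((EuclideanSpace.equiv (Fin n) ℝ).symm v) -
      Submodule.orthogonalProjectionOnto _ ((EuclideanSpace.equiv (Fin n) ℝ).symm w) =
      Submodule.orthogonalProjectionOnto _ ((EuclideanSpace.equiv (Fin n) ℝ).symm v -
        (EuclideanSpace.equiv (Fin n) ℝ).symm w) := (map_sub _ _ _).symm
  have hmem : (EuclideanSpace.equiv (Fin n) ℝ).symm v -
      (EuclideanSpace.equiv (Fin n) ℝ).symm w ∈
      (G.map ((EuclideanSpace.equiv (Fin n) ℝ).symm.toLinearEquiv :
          (Fin n → ℝ) →ₗ[ℝ] EuclideanSpace ℝ (Fin n)))ᗮ := by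
    rw [Submodule.mem_orthogonal]
    rintro u hu
    rw [Submodule.mem_map] at hu
    obtain ⟨g, hg, rfl⟩ := hu
    rw [← map_sub]
    have hvw := h g hg
    simp only [dotProduct, Pi.sub_apply] at hvw
    simp only [LinearEquiv.coe_coe, ContinuousLinearEquiv.coe_toLinearEquiv,
      PiLp.inner_apply, RCLike.inner_apply, conj_trivial, EuclideanSpace.equiv,
      PiLp.continuousLinearEquiv_symm_apply, Pi.sub_apply]
    rw [← hvw]
  have hz := Submodule.orthogonalProjectionOnto_apply_of_mem_orthogonal hmem
  rw [hz] at hsub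
  exact congrArg Subtype.val (sub_eq_zero.1 hsub)

theorem projG_continuous {n : ℕ} (G : Submodule ℝ (Fin n → ℝ)) : Continuous (projG G) := by
  unfold projG
  exact (EuclideanSpace.equiv (Fin n) ℝ).continuous.comp
    (continuous_subtype_val.comp ((Submodule.orthogonalProjectionOnto _).continuous.comp
      (EuclideanSpace.equiv (Fin n) ℝ).symm.continuous))

/-! ### GJ and AJmat lemmas -/

variable {N Q P r : ℕ} {Φ : Matrix (Fin Q) (Fin N) ℝ} {D : Matrix (Fin N) (Fin P) ℝ}
  {J : Set (Fin P)} {U : Matrix (Fin N) (Fin r) ℝ}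

theorem col_mem_GJ (hU : ColBasis U (GJ D J)) (k : Fin r) : (fun i => U i k) ∈ GJ D J :=
  hU.2 ▸ Submodule.subset_span ⟨k, rfl⟩

theorem mulVec_mem_GJ (hU : ColBasis U (GJ D J)) (c : Fin r → ℝ) : U.mulVec c ∈ GJ D J := by
  rw [mulVec_eq_sum_cols]
  exact Submodule.sum_mem _ fun k _ => Submodule.smul_mem _ _ (col_mem_GJ hU k)

theorem dot_Dsupp (S : Set (Fin P)) (w : Fin P → ℝ) (hw : ∀ i, i ∉ S → w i = 0)
    {g : Fin N → ℝ} (hg : g ∈ GJ D S) : (D.mulVec w) ⬝ᵥ g = 0 := by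
  rw [show (D.mulVec w) ⬝ᵥ g = w ⬝ᵥ Dᵀ.mulVec g from (dot_transpose D w g).symm]
  rw [dotProduct]
  refine Finset.sum_eq_zero fun i _ => ?_
  by_cases hi : i ∈ S
  · rw [hg i hi, mul_zero]
  · rw [hw i hi, zero_mul]

theorem gram_det_isUnit (hJ : HJcond Φ D J) (hU : ColBasis U (GJ D J)) :
    IsUnit (Uᵀ * Φᵀ * Φ * U).det := by
  rw [isUnit_iff_ne_zero]
  intro h0
  obtain ⟨c, hc0, hc⟩ := Matrix.exists_mulVec_eq_zero_iff.2 h0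
  have hexp : (Uᵀ * Φᵀ * Φ * U).mulVec c =
      Uᵀ.mulVec (Φᵀ.mulVec (Φ.mulVec (U.mulVec c))) := by
    simp [Matrix.mulVec_mulVec, Matrix.mul_assoc]
  have hdot : c ⬝ᵥ (Uᵀ * Φᵀ * Φ * U).mulVec c =
      (Φ.mulVec (U.mulVec c)) ⬝ᵥ (Φ.mulVec (U.mulVec c)) := by
    rw [hexp, dot_transpose U c _, dot_transpose Φ _ _]
  have hzero : (Φ.mulVec (U.mulVec c)) ⬝ᵥ (Φ.mulVec (U.mulVec c)) = 0 := by
    rw [← hdot, hc, dotProduct_zero]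
  have hb : Φ.mulVec (U.mulVec c) = 0 := by
    have := dotProduct_self_eq_zero.1 hzero
    exact this
  have hUc : U.mulVec c = 0 := hJ _ hb (mulVec_mem_GJ hU c)
  have : c = 0 := by
    have hli := Fintype.linearIndependent_iff.1 hU.1
    have : ∑ k, c k • (fun i => U i k) = 0 := by rw [← mulVec_eq_sum_cols, hUc]
    exact funext (hli c this)
  exact hc0 this

theorem AJmat_mul (hdet : IsUnit (Uᵀ * Φᵀ * Φ * U).det) :
    AJmat Φ U * (Φᵀ * Φ * U) = U := by
  have hinv : (Uᵀ * Φᵀ * Φ * U)⁻¹ * (Uᵀ * Φᵀ * Φ * U) = 1 := Matrix.nonsing_inv_mul _ hdet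
  calc AJmat Φ U * (Φᵀ * Φ * U)
      = U * ((Uᵀ * Φᵀ * Φ * U)⁻¹ * (Uᵀ * Φᵀ * Φ * U)) := by
        unfold AJmat; simp only [Matrix.mul_assoc]
    _ = U := by rw [hinv, Matrix.mul_one]

theorem AJmat_id (hJ : HJcond Φ D J) (hU : ColBasis U (GJ D J)) {x : Fin N → ℝ}
    (hx : x ∈ GJ D J) : (AJmat Φ U).mulVec (Φᵀ.mulVec (Φ.mulVec x)) = x := by
  have hx' : x ∈ Submodule.span ℝ (Set.range (fun k : Fin r => (fun i => U i k))) := by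
    rw [hU.2]; exact hx
  obtain ⟨c, hc⟩ := (Submodule.mem_span_range_iff_exists_fun ℝ).1 hx'
  have hxc : x = U.mulVec c := by rw [mulVec_eq_sum_cols, hc]
  subst hxc
  calc (AJmat Φ U).mulVec (Φᵀ.mulVec (Φ.mulVec (U.mulVec c)))
      = (AJmat Φ U * (Φᵀ * Φ * U)).mulVec c := by
        simp [Matrix.mulVec_mulVec, Matrix.mul_assoc]
    _ = U.mulVec c := by rw [AJmat_mul (gram_det_isUnit hJ hU)]

theorem AJmat_perp (hU : ColBasis U (GJ D J)) {w : Fin N → ℝ}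
    (hw : ∀ g ∈ GJ D J, w ⬝ᵥ g = 0) : (AJmat Φ U).mulVec w = 0 := by
  have hUw : Uᵀ.mulVec w = 0 := by
    funext k
    have h1 : Uᵀ.mulVec w k = w ⬝ᵥ (fun i => U i k) := by
      simp [Matrix.mulVec, dotProduct, Matrix.transpose_apply, mul_comm]
    rw [h1]
    exact (hw _ (col_mem_GJ hU k)).trans rfl
  show (U * (Uᵀ * Φᵀ * Φ * U)⁻¹ * Uᵀ).mulVec w = 0
  rw [Matrix.mul_assoc, ← Matrix.mulVec_mulVec, ← Matrix.mulVec_mulVec, hUw]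
  simp

theorem AJmat_mem_GJ (hU : ColBasis U (GJ D J)) (w : Fin N → ℝ) :
    (AJmat Φ U).mulVec w ∈ GJ D J := by
  show (U * (Uᵀ * Φᵀ * Φ * U)⁻¹ * Uᵀ).mulVec w ∈ GJ D J
  rw [Matrix.mul_assoc, ← Matrix.mulVec_mulVec]
  exact mulVec_mem_GJ hU _

end LassoAux2

namespace LassoAux3

open Matrix Set LassoAux LassoAux2

variable {N Q P : ℕ} {Φ : Matrix (Fin Q) (Fin N) ℝ} {D : Matrix (Fin N) (Fin P) ℝ}
  {y : Fin Q → ℝ} {lam : ℝ}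

theorem lassoObj_expand (Φ : Matrix (Fin Q) (Fin N) ℝ) (D : Matrix (Fin N) (Fin P) ℝ)
    (y : Fin Q → ℝ) (lam : ℝ) (x d : Fin N → ℝ) :
    lassoObj Φ D y lam (x + d) = lassoObj Φ D y lam x
      + Φᵀ.mulVec (Φ.mulVec x - y) ⬝ᵥ d
      + (1/2) * ∑ i, (Φ.mulVec d i)^2
      + lam * ((∑ j, |Dᵀ.mulVec (x + d) j|) - ∑ j, |Dᵀ.mulVec x j|) := by
  have hdot : Φᵀ.mulVec (Φ.mulVec x - y) ⬝ᵥ d = ∑ i, (Φ.mulVec x i - y i) * Φ.mulVec d i := by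
    rw [dotProduct_comm, dot_transpose]
    simp [dotProduct, Pi.sub_apply, mul_comm]
  have hq : ∑ i, (y i - Φ.mulVec (x + d) i)^2 =
      (∑ i, (y i - Φ.mulVec x i)^2) + (∑ i, 2*((Φ.mulVec x i - y i) * Φ.mulVec d i))
        + ∑ i, (Φ.mulVec d i)^2 := by
    rw [← Finset.sum_add_distrib, ← Finset.sum_add_distrib]
    refine Finset.sum_congr rfl fun i _ => ?_
    rw [Matrix.mulVec_add, Pi.add_apply]
    ring
  unfold lassoObj
  rw [hq, hdot]
  rw [show (∑ i, 2*((Φ.mulVec x i - y i) * Φ.mulVec d i))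
      = 2 * ∑ i, (Φ.mulVec x i - y i) * Φ.mulVec d i from (Finset.mul_sum _ _ _).symm]
  ring

theorem sol_of_cert (hlam : 0 < lam) (x u : _)
    (heq : Φᵀ.mulVec (Φ.mulVec x - y) + lam • D.mulVec u = 0)
    (hu1 : ∀ i, |u i| ≤ 1) (hu2 : ∀ i, u i * Dᵀ.mulVec x i = |Dᵀ.mulVec x i|) :
    IsLassoSol Φ D y lam x := by
  intro x'
  have hxd : x + (x' - x) = x' := by abel
  have hexp := lassoObj_expand Φ D y lam x (x' - x)
  rw [hxd] at hexp
  set d := x' - x with hd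
  have h1 : ∀ j, u j * Dᵀ.mulVec d j ≤ |Dᵀ.mulVec x' j| - |Dᵀ.mulVec x j| := by
    intro j
    have hsplit : Dᵀ.mulVec x' j = Dᵀ.mulVec x j + Dᵀ.mulVec d j := by
      rw [← hxd, Matrix.mulVec_add, Pi.add_apply]
    have habs : u j * (Dᵀ.mulVec x j + Dᵀ.mulVec d j) ≤ |Dᵀ.mulVec x j + Dᵀ.mulVec d j| := by
      calc u j * (Dᵀ.mulVec x j + Dᵀ.mulVec d j) ≤ |u j * (Dᵀ.mulVec x j + Dᵀ.mulVec d j)| :=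
            le_abs_self _
        _ = |u j| * |Dᵀ.mulVec x j + Dᵀ.mulVec d j| := abs_mul _ _
        _ ≤ 1 * |Dᵀ.mulVec x j + Dᵀ.mulVec d j| :=
            mul_le_mul_of_nonneg_right (hu1 j) (abs_nonneg _)
        _ = |Dᵀ.mulVec x j + Dᵀ.mulVec d j| := one_mul _
    rw [mul_add] at habs
    rw [hsplit]
    linarith [hu2 j]
  have hsum : u ⬝ᵥ Dᵀ.mulVec d ≤ (∑ j, |Dᵀ.mulVec x' j|) - ∑ j, |Dᵀ.mulVec x j| := by
    rw [dotProduct, ← Finset.sum_sub_distrib]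
    exact Finset.sum_le_sum fun j _ => h1 j
  have hlin : Φᵀ.mulVec (Φ.mulVec x - y) ⬝ᵥ d + lam * (u ⬝ᵥ Dᵀ.mulVec d) = 0 := by
    have h0 : (Φᵀ.mulVec (Φ.mulVec x - y) + lam • D.mulVec u) ⬝ᵥ d = 0 := by
      rw [heq, zero_dotProduct]
    rw [add_dotProduct, smul_dotProduct, smul_eq_mul] at h0
    rw [← dot_transpose D u d] at h0
    linarith
  have hquad : 0 ≤ (1/2) * ∑ i, (Φ.mulVec d i)^2 := by positivity
  have hl1 : lam * (u ⬝ᵥ Dᵀ.mulVec d) ≤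
      lam * ((∑ j, |Dᵀ.mulVec x' j|) - ∑ j, |Dᵀ.mulVec x j|) :=
    mul_le_mul_of_nonneg_left hsum hlam.le
  linarith [hexp.ge, hexp.le]

theorem cert_of_sol (hlam : 0 < lam) {x : Fin N → ℝ} (hx : IsLassoSol Φ D y lam x) :
    ∃ u : Fin P → ℝ, Φᵀ.mulVec (Φ.mulVec x - y) + lam • D.mulVec u = 0 ∧
      (∀ i, |u i| ≤ 1) ∧ (∀ i, u i * Dᵀ.mulVec x i = |Dᵀ.mulVec x i|) := by
  classical
  set a := Dᵀ.mulVec x with ha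
  set g := Φᵀ.mulVec (Φ.mulVec x - y) with hg
  set Box : Set (Fin P → ℝ) :=
    Set.univ.pi (fun i => if a i = 0 then Set.Icc (-1:ℝ) 1
      else {(if 0 < a i then (1:ℝ) else -1)}) with hBox
  set C : Set (Fin N → ℝ) := (D.mulVecLin : (Fin P → ℝ) →ₗ[ℝ] (Fin N → ℝ)) '' Box with hC
  have hBoxConv : Convex ℝ Box := convex_pi fun i _ => by
    split_ifs; exacts [convex_Icc _ _, convex_singleton _, convex_singleton _]
  have hBoxCpt : IsCompact Box := isCompact_univ_pi fun i => by
    split_ifs; exacts [isCompact_Icc, isCompact_singleton, isCompact_singleton]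
  have hCconv : Convex ℝ C := hBoxConv.linear_image _
  have hCcl : IsClosed C :=
    (hBoxCpt.image D.mulVecLin.continuous_of_finiteDimensional).isClosed
  by_cases hmem : (-(lam⁻¹) • g) ∈ C
  · obtain ⟨u, huB, huD⟩ := hmem
    rw [Matrix.mulVecLin_apply] at huD
    refine ⟨u, ?_, fun i => ?_, fun i => ?_⟩
    · rw [huD, smul_smul]
      rw [show lam * -lam⁻¹ = -1 by field_simp]
      funext i
      simp
    · have hBi : u i ∈ (if a i = 0 then Set.Icc (-1:ℝ) 1
          else {(if 0 < a i then (1:ℝ) else -1)}) := huB i (Set.mem_univ i)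
      by_cases h : a i = 0
      · rw [if_pos h] at hBi
        exact abs_le.2 ⟨hBi.1, hBi.2⟩
      · rw [if_neg h, Set.mem_singleton_iff] at hBi
        rw [hBi]; split_ifs <;> norm_num
    · have hBi : u i ∈ (if a i = 0 then Set.Icc (-1:ℝ) 1
          else {(if 0 < a i then (1:ℝ) else -1)}) := huB i (Set.mem_univ i)
      by_cases h : a i = 0
      · show u i * a i = |a i|
        rw [h, mul_zero, abs_zero]
      · rw [if_neg h, Set.mem_singleton_iff] at hBi
        show u i * a i = |a i|
        rw [hBi]
        rcases lt_or_gt_of_ne h with h' | h'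
        · rw [if_neg (by linarith), abs_of_neg h']; ring
        · rw [if_pos h', abs_of_pos h', one_mul]
  · exfalso
    obtain ⟨f, u0, hfC, hfx⟩ := geometric_hahn_banach_closed_point hCconv hCcl hmem
    set h : Fin N → ℝ := fun i => f (fun j => if i = j then 1 else 0) with hh
    have hfd : ∀ z, f z = z ⬝ᵥ h := by
      intro z
      conv_lhs => rw [pi_eq_sum_univ z]
      rw [map_sum]
      refine Finset.sum_congr rfl fun i _ => ?_
      rw [_root_.map_smul, smul_eq_mul]
    set b := Dᵀ.mulVec h with hb
    set ustar : Fin P → ℝ := fun i => if a i = 0 then (if 0 ≤ b i then (1:ℝ) else -1)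
      else (if 0 < a i then (1:ℝ) else -1) with hustar
    have hustarval : ∀ i, ustar i = if a i = 0 then (if 0 ≤ b i then (1:ℝ) else -1)
      else (if 0 < a i then (1:ℝ) else -1) := fun i => rfl
    have hustarBox : ustar ∈ Box := by
      intro i _
      show ustar i ∈ (if a i = 0 then Set.Icc (-1:ℝ) 1
        else {(if 0 < a i then (1:ℝ) else -1)})
      by_cases h1 : a i = 0
      · rw [if_pos h1]
        rw [Set.mem_Icc, hustarval i, if_pos h1]
        split_ifs <;> norm_num
      · rw [if_neg h1, Set.mem_singleton_iff, hustarval i, if_neg h1]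
    have hδ : g ⬝ᵥ h + lam * (ustar ⬝ᵥ b) < 0 := by
      have h1 : f (D.mulVec ustar) < u0 := by
        have := hfC _ ⟨ustar, hustarBox, rfl⟩
        rwa [Matrix.mulVecLin_apply] at this
      have h2 : u0 < f (-(lam⁻¹) • g) := hfx
      rw [hfd] at h1 h2
      have h3 : (D.mulVec ustar) ⬝ᵥ h = ustar ⬝ᵥ b := (dot_transpose D ustar h).symm
      have h4 : (-(lam⁻¹) • g) ⬝ᵥ h = -(lam⁻¹) * (g ⬝ᵥ h) := by
        rw [smul_dotProduct, smul_eq_mul]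
      rw [h3] at h1
      rw [h4] at h2
      have h5 : ustar ⬝ᵥ b < -(lam⁻¹) * (g ⬝ᵥ h) := h1.trans h2
      have h6 : lam * (ustar ⬝ᵥ b) < lam * (-(lam⁻¹) * (g ⬝ᵥ h)) :=
        mul_lt_mul_of_pos_left h5 hlam
      have h7 : lam * (-(lam⁻¹) * (g ⬝ᵥ h)) = -(g ⬝ᵥ h) := by
        rw [show lam * (-(lam⁻¹) * (g ⬝ᵥ h)) = -((lam * lam⁻¹) * (g ⬝ᵥ h)) by ring,
          mul_inv_cancel₀ hlam.ne', one_mul]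
      linarith
    -- uniform small-t bound
    have hunif : ∃ t₀ : ℝ, 0 < t₀ ∧ ∀ i, a i ≠ 0 → ∀ t : ℝ, 0 ≤ t → t ≤ t₀ →
        |t * b i| ≤ |a i| := by
      obtain ⟨δ, hδ0, hδle⟩ := exists_pos_le (fun i => a i ≠ 0)
        (fun i => |a i| / (|b i| + 1)) (fun i hi => by positivity)
      refine ⟨δ, hδ0, fun i hi t ht0 htδ => ?_⟩
      have h1 : t ≤ |a i| / (|b i| + 1) := htδ.trans (hδle i hi)
      have h2 : t * (|b i| + 1) ≤ |a i| := by
        rw [← le_div_iff₀ (by positivity)]; exact h1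
      rw [abs_mul, abs_of_nonneg ht0]
      nlinarith [abs_nonneg (b i)]
    obtain ⟨t₀, ht₀, hsmall⟩ := hunif
    -- ℓ1 expansion for 0 ≤ t ≤ t₀
    have hl1exp : ∀ t : ℝ, 0 ≤ t → t ≤ t₀ →
        (∑ j, |a j + t * b j|) = (∑ j, |a j|) + t * (ustar ⬝ᵥ b) := by
      intro t ht0 htt
      rw [dotProduct, Finset.mul_sum, ← Finset.sum_add_distrib]
      refine Finset.sum_congr rfl fun j _ => ?_
      by_cases hj : a j = 0
      · rw [hj, abs_zero, zero_add, zero_add]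
        rw [hustarval j, if_pos hj, abs_mul, abs_of_nonneg ht0]
        rcases le_or_gt 0 (b j) with hbj | hbj
        · rw [if_pos hbj, abs_of_nonneg hbj]; ring
        · rw [if_neg (not_le.2 hbj), abs_of_neg hbj]; ring
      · rw [abs_add_eq (hsmall j hj t ht0 htt), hustarval j, if_neg hj]
        have : (if 0 ≤ a j then (1:ℝ) else -1) = (if 0 < a j then (1:ℝ) else -1) := by
          rcases lt_or_gt_of_ne hj with h' | h'
          · rw [if_neg (not_le.2 h'), if_neg (not_lt.2 h'.le)]
          · rw [if_pos h'.le, if_pos h']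
        rw [this]; ring
    -- the objective along x + t • h
    set c2 := (1/2) * ∑ i, (Φ.mulVec h i)^2 with hc2
    have hc2nn : 0 ≤ c2 := by positivity
    set δ := g ⬝ᵥ h + lam * (ustar ⬝ᵥ b) with hδdef
    have hobj : ∀ t : ℝ, 0 ≤ t → t ≤ t₀ →
        lassoObj Φ D y lam (x + t • h) = lassoObj Φ D y lam x + t * δ + t^2 * c2 := by
      intro t ht0 htt
      have hexp := lassoObj_expand Φ D y lam x (t • h)
      have hDt : ∀ j, Dᵀ.mulVec (x + t • h) j = a j + t * b j := by
        intro j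
        rw [Matrix.mulVec_add, Pi.add_apply, Matrix.mulVec_smul, Pi.smul_apply, smul_eq_mul]
      have hsum1 : (∑ j, |Dᵀ.mulVec (x + t • h) j|) = ∑ j, |a j + t * b j| :=
        Finset.sum_congr rfl fun j _ => by rw [hDt j]
      have hdot1 : g ⬝ᵥ (t • h) = t * (g ⬝ᵥ h) := by
        rw [dotProduct_smul, smul_eq_mul]
      have hquad1 : (1/2) * ∑ i, (Φ.mulVec (t • h) i)^2 = t^2 * c2 := by
        rw [hc2, Finset.mul_sum, Finset.mul_sum, Finset.mul_sum]
        refine Finset.sum_congr rfl fun i _ => ?_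
        rw [Matrix.mulVec_smul, Pi.smul_apply, smul_eq_mul]
        ring
      rw [hexp, hsum1, hl1exp t ht0 htt, hdot1, hquad1, hδdef]
      have hax : (∑ j, |a j|) = ∑ j, |Dᵀ.mulVec x j| := rfl
      rw [hax]
      ring
    have hδneg : δ < 0 := hδ
    set t := min t₀ ((-δ) / (2 * (c2 + 1))) with htdef
    have htpos : 0 < t := lt_min ht₀ (div_pos (neg_pos.2 hδneg) (by positivity))
    have htt₀ : t ≤ t₀ := min_le_left _ _
    have h1 : t * (2 * (c2 + 1)) ≤ -δ := by
      rw [← le_div_iff₀ (by positivity)]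
      exact min_le_right _ _
    have hneg : t * δ + t^2 * c2 < 0 := by
      nlinarith [mul_le_mul_of_nonneg_left h1 htpos.le, mul_pos htpos htpos]
    have hcontr := hx (x + t • h)
    rw [hobj t htpos.le htt₀] at hcontr
    linarith

end LassoAux3

namespace LassoAux4

open Matrix Set LassoAux LassoAux2 LassoAux3

variable {N Q P : ℕ} {Φ : Matrix (Fin Q) (Fin N) ℝ} {D : Matrix (Fin N) (Fin P) ℝ}
  {y : Fin Q → ℝ} {lam : ℝ}

theorem mem_GJ {J : Set (Fin P)} {x : Fin N → ℝ} :
    x ∈ GJ D J ↔ ∀ j ∈ J, Dᵀ.mulVec x j = 0 := Iff.rfl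

theorem lassoObj_continuous (Φ : Matrix (Fin Q) (Fin N) ℝ) (D : Matrix (Fin N) (Fin P) ℝ)
    (y : Fin Q → ℝ) (lam : ℝ) : Continuous (lassoObj Φ D y lam) := by
  unfold lassoObj
  have h1 : Continuous fun x : Fin N → ℝ => Φ.mulVec x := continuous_mulVec Φ
  have h2 : Continuous fun x : Fin N → ℝ => Dᵀ.mulVec x := continuous_mulVec Dᵀ
  refine Continuous.add ?_ ?_
  · exact continuous_const.mul (continuous_finset_sum _ fun i _ =>
      ((continuous_const.sub ((continuous_apply i).comp h1)).pow 2))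
  · exact continuous_const.mul (continuous_finset_sum _ fun j _ =>
      ((continuous_apply j).comp h2).abs)

theorem exists_sol (hN : 0 < N)
    (hH0 : ∀ x : Fin N → ℝ, Φ.mulVec x = 0 → Dᵀ.mulVec x = 0 → x = 0)
    (hlam : 0 < lam) (y : Fin Q → ℝ) : ∃ x, IsLassoSol Φ D y lam x := by
  classical
  haveI : NeZero N := ⟨hN.ne'⟩
  set nn : (Fin N → ℝ) → ℝ := fun x => ‖Φ.mulVec x‖ + ∑ j, |Dᵀ.mulVec x j| with hnn
  have hncont : Continuous nn := ((continuous_mulVec Φ).norm).add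
    (continuous_finset_sum _ fun j _ => ((continuous_apply j).comp (continuous_mulVec Dᵀ)).abs)
  have hsph : (Metric.sphere (0 : Fin N → ℝ) 1).Nonempty :=
    NormedSpace.sphere_nonempty.2 zero_le_one
  obtain ⟨z0, hz0mem, hz0min⟩ := (isCompact_sphere (0 : Fin N → ℝ) 1).exists_isMinOn hsph
    hncont.continuousOn
  set m := nn z0 with hm
  have hz0norm : ‖z0‖ = 1 := by rwa [mem_sphere_iff_norm, sub_zero] at hz0mem
  have hmpos : 0 < m := by
    have h0 : 0 ≤ m := add_nonneg (norm_nonneg _) (Finset.sum_nonneg fun j _ => abs_nonneg _)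
    rcases h0.lt_or_eq with hlt | heq
    · exact hlt
    · exfalso
      have hsumnn : 0 ≤ ∑ j, |Dᵀ.mulVec z0 j| := Finset.sum_nonneg fun j _ => abs_nonneg _
      have h1 : ‖Φ.mulVec z0‖ = 0 := by
        have := heq.symm; rw [hm, hnn] at this; dsimp only at this
        have := norm_nonneg (Φ.mulVec z0); linarith [heq.symm, hsumnn,
          (show ‖Φ.mulVec z0‖ + ∑ j, |Dᵀ.mulVec z0 j| = 0 from by
            rw [hm, hnn] at heq; exact heq.symm)]
      have h2 : ∑ j, |Dᵀ.mulVec z0 j| = 0 := by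
        have h3 : ‖Φ.mulVec z0‖ + ∑ j, |Dᵀ.mulVec z0 j| = 0 := by
          rw [hm, hnn] at heq; exact heq.symm
        linarith [norm_nonneg (Φ.mulVec z0)]
      have hΦ0 : Φ.mulVec z0 = 0 := norm_eq_zero.1 h1
      have hD0 : Dᵀ.mulVec z0 = 0 := by
        funext j
        have := (Finset.sum_eq_zero_iff_of_nonneg (fun j _ => abs_nonneg _)).1 h2 j
          (Finset.mem_univ j)
        exact abs_eq_zero.1 this
      have : z0 = 0 := hH0 z0 hΦ0 hD0
      rw [this, norm_zero] at hz0norm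
      exact one_ne_zero hz0norm.symm
  have hlow : ∀ x : Fin N → ℝ, m * ‖x‖ ≤ nn x := by
    intro x
    rcases eq_or_ne x 0 with rfl | hx
    · simp [hnn, Matrix.mulVec_zero]
    · have hxn : ‖x‖ ≠ 0 := norm_ne_zero_iff.2 hx
      have hz : (‖x‖⁻¹ • x) ∈ Metric.sphere (0 : Fin N → ℝ) 1 := by
        rw [mem_sphere_iff_norm, sub_zero, norm_smul, norm_inv, norm_norm,
          inv_mul_cancel₀ hxn]
      have h1 : m ≤ nn (‖x‖⁻¹ • x) := isMinOn_iff.1 hz0min _ hz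
      have h2 : nn (‖x‖⁻¹ • x) = ‖x‖⁻¹ * nn x := by
        rw [hnn]; dsimp only
        rw [Matrix.mulVec_smul, Matrix.mulVec_smul, norm_smul, norm_inv, norm_norm]
        have habs : ∀ j, |(‖x‖⁻¹ • Dᵀ.mulVec x) j| = ‖x‖⁻¹ * |Dᵀ.mulVec x j| := fun j => by
          rw [Pi.smul_apply, smul_eq_mul, abs_mul, abs_of_nonneg (inv_nonneg.2 (norm_nonneg x))]
        rw [Finset.sum_congr rfl fun j _ => habs j, ← Finset.mul_sum, mul_add]
      rw [h2] at h1
      have h3 := mul_le_mul_of_nonneg_left h1 (norm_nonneg x)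
      rw [← mul_assoc, mul_inv_cancel₀ hxn, one_mul] at h3
      linarith [mul_comm m ‖x‖ ▸ h3]
  clear_value nn m
  have hgrow : ∀ b : ℝ, ∃ R : ℝ, ∀ x : Fin N → ℝ, R ≤ ‖x‖ → b ≤ lassoObj Φ D y lam x := by
    intro b
    set B := max b 0 with hB
    refine ⟨max ((2 * (B + 1)) / (lam * m)) ((2 / m) * (‖y‖ + Real.sqrt (2 * B))),
      fun x hR => ?_⟩
    have hnx : m * ‖x‖ ≤ nn x := hlow x
    rw [hnn] at hnx; dsimp only at hnx
    have hL0 : 0 ≤ (1/2) * ∑ i, (y i - Φ.mulVec x i)^2 := by positivity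
    have hl1nn : 0 ≤ ∑ j, |Dᵀ.mulVec x j| := Finset.sum_nonneg fun j _ => abs_nonneg _
    have hBb : b ≤ B := le_max_left b 0
    have hB0 : 0 ≤ B := le_max_right b 0
    clear_value B
    rcases le_or_gt (m * ‖x‖ / 2) (∑ j, |Dᵀ.mulVec x j|) with hc | hc
    · have h1 : (2 * (B + 1)) / (lam * m) ≤ ‖x‖ := le_trans (le_max_left _ _) hR
      have h2 : 2 * (B + 1) ≤ ‖x‖ * (lam * m) := by
        rw [div_le_iff₀ (by positivity)] at h1; linarith
      unfold lassoObj
      have h3 : lam * (m * ‖x‖ / 2) = ‖x‖ * (lam * m) / 2 := by ring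
      linarith [mul_le_mul_of_nonneg_left hc hlam.le]
    · have hΦx : m * ‖x‖ / 2 ≤ ‖Φ.mulVec x‖ := by linarith
      have hys : ‖y‖ + Real.sqrt (2 * B) ≤ m * ‖x‖ / 2 := by
        have h1 : (2 / m) * (‖y‖ + Real.sqrt (2 * B)) ≤ ‖x‖ := le_trans (le_max_right _ _) hR
        have h2 : (2 / m) * (‖y‖ + Real.sqrt (2 * B)) * (m / 2) ≤ ‖x‖ * (m / 2) :=
          mul_le_mul_of_nonneg_right h1 (by positivity)
        have h3 : (2 / m) * (‖y‖ + Real.sqrt (2 * B)) * (m / 2) = ‖y‖ + Real.sqrt (2 * B) := by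
          field_simp
        have h4 : ‖x‖ * (m / 2) = m * ‖x‖ / 2 := by ring
        linarith
      have htri : ‖Φ.mulVec x‖ - ‖y‖ ≤ ‖y - Φ.mulVec x‖ := by
        have h1 := norm_sub_norm_le (Φ.mulVec x) y
        rw [norm_sub_rev] at h1
        linarith [abs_nonneg (‖Φ.mulVec x‖ - ‖y‖)]
      have hsq : ‖y - Φ.mulVec x‖^2 ≤ ∑ i, (y i - Φ.mulVec x i)^2 := by
        have hnn0 : (0:ℝ) ≤ Real.sqrt (∑ i, (y i - Φ.mulVec x i)^2) := Real.sqrt_nonneg _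
        have h1 : ‖y - Φ.mulVec x‖ ≤ Real.sqrt (∑ i, (y i - Φ.mulVec x i)^2) := by
          rw [pi_norm_le_iff_of_nonneg hnn0]
          intro i
          rw [Real.norm_eq_abs, show (y - Φ.mulVec x) i = y i - Φ.mulVec x i from rfl,
            ← Real.sqrt_sq_eq_abs]
          exact Real.sqrt_le_sqrt (Finset.single_le_sum (f := fun i => (y i - Φ.mulVec x i)^2)
            (fun i _ => sq_nonneg _) (Finset.mem_univ i))
        calc ‖y - Φ.mulVec x‖^2 ≤ (Real.sqrt (∑ i, (y i - Φ.mulVec x i)^2))^2 := by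
              nlinarith [norm_nonneg (y - Φ.mulVec x)]
          _ = ∑ i, (y i - Φ.mulVec x i)^2 := Real.sq_sqrt (by positivity)
      have h3 : Real.sqrt (2 * B) ≤ ‖y - Φ.mulVec x‖ := by linarith
      have h4 : 2 * B ≤ ‖y - Φ.mulVec x‖^2 := by
        have h5 := Real.sq_sqrt (show (0:ℝ) ≤ 2 * B by positivity)
        nlinarith [Real.sqrt_nonneg (2 * B)]
      unfold lassoObj
      nlinarith [mul_nonneg hlam.le hl1nn]
  obtain ⟨R, hR⟩ := hgrow (lassoObj Φ D y lam 0)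
  set R' := max R 1 with hR'
  have hKcpt : IsCompact (Metric.closedBall (0 : Fin N → ℝ) R') :=
    isCompact_closedBall _ _
  have hKne : (Metric.closedBall (0 : Fin N → ℝ) R').Nonempty :=
    ⟨0, Metric.mem_closedBall_self (by positivity)⟩
  obtain ⟨xs, hxsmem, hxsmin⟩ := hKcpt.exists_isMinOn hKne
    (lassoObj_continuous Φ D y lam).continuousOn
  refine ⟨xs, fun x' => ?_⟩
  by_cases hx' : x' ∈ Metric.closedBall (0 : Fin N → ℝ) R'
  · exact isMinOn_iff.1 hxsmin _ hx'
  · have h1 : R' ≤ ‖x'‖ := by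
      rw [Metric.mem_closedBall, dist_zero_right] at hx'
      linarith [not_le.1 hx']
    have h2 := hR x' (le_trans (le_trans (le_max_left R 1) le_rfl) h1)
    exact le_trans (isMinOn_iff.1 hxsmin _ (Metric.mem_closedBall_self (by positivity))) h2

theorem exists_good_sol (hN : 0 < N)
    (hH0 : ∀ x : Fin N → ℝ, Φ.mulVec x = 0 → Dᵀ.mulVec x = 0 → x = 0)
    (hlam : 0 < lam) (y : Fin Q → ℝ) :
    ∃ x, IsLassoSol Φ D y lam x ∧ HJcond Φ D {j | Dᵀ.mulVec x j = 0} := by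
  classical
  obtain ⟨x0, hx0⟩ := exists_sol hN hH0 hlam y
  suffices H : ∀ (n : ℕ) (x : Fin N → ℝ), IsLassoSol Φ D y lam x →
      (Finset.univ.filter fun j => Dᵀ.mulVec x j ≠ 0).card ≤ n →
      ∃ x', IsLassoSol Φ D y lam x' ∧ HJcond Φ D {j | Dᵀ.mulVec x' j = 0} by
    exact H P x0 hx0 (le_trans (Finset.card_filter_le _ _) (by simp))
  intro n
  induction n with
  | zero =>
    intro x hx hcard
    refine ⟨x, hx, fun z hz hzG => hH0 z hz (funext fun j => hzG j ?_)⟩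
    have hemp : (Finset.univ.filter fun j => Dᵀ.mulVec x j ≠ 0) = ∅ :=
      Finset.card_eq_zero.1 (Nat.le_zero.1 hcard)
    show Dᵀ.mulVec x j = 0
    by_contra hj
    have : j ∈ (Finset.univ.filter fun j => Dᵀ.mulVec x j ≠ 0) :=
      Finset.mem_filter.2 ⟨Finset.mem_univ j, hj⟩
    rw [hemp] at this
    exact absurd this (Finset.notMem_empty j)
  | succ n ih =>
    intro x hx hcard
    by_cases hJ : HJcond Φ D {j | Dᵀ.mulVec x j = 0}
    · exact ⟨x, hx, hJ⟩
    · unfold HJcond at hJ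
      push_neg at hJ
      obtain ⟨h, hΦh, hGh, hh0⟩ := hJ
      set a := Dᵀ.mulVec x with ha
      set bb := Dᵀ.mulVec h with hbbdef
      have hbb0 : bb ≠ 0 := fun hb => hh0 (hH0 h hΦh hb)
      have hbbJ : ∀ j, a j = 0 → bb j = 0 := fun j hj => hGh j hj
      have hne : (Finset.univ.filter fun j => bb j ≠ 0).Nonempty := by
        rcases Function.ne_iff.1 hbb0 with ⟨j, hj⟩
        exact ⟨j, Finset.mem_filter.2 ⟨Finset.mem_univ j, by simpa using hj⟩⟩
      obtain ⟨js, hjsmem, hjsmin⟩ := Finset.exists_min_image _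
        (fun j => |a j| / |bb j|) hne
      have hbbjs : bb js ≠ 0 := (Finset.mem_filter.1 hjsmem).2
      set t := -(a js / bb js) with htdef
      have habst : |t| = |a js| / |bb js| := by rw [htdef, abs_neg, abs_div]
      have hkey : ∀ j, |t * bb j| ≤ |a j| := by
        intro j
        by_cases hbj : bb j = 0
        · rw [hbj, mul_zero, abs_zero]; positivity
        · have h1 : |a js| / |bb js| ≤ |a j| / |bb j| :=
            hjsmin j (Finset.mem_filter.2 ⟨Finset.mem_univ j, hbj⟩)
          have hbja : 0 < |bb j| := abs_pos.2 hbj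
          rw [abs_mul, habst]
          calc |a js| / |bb js| * |bb j| ≤ |a j| / |bb j| * |bb j| := by gcongr
            _ = |a j| := div_mul_cancel₀ _ hbja.ne'
      set c := ∑ j, bb j * (if 0 ≤ a j then (1:ℝ) else -1) with hcdef
      have hF : ∀ s : ℝ, |s| ≤ |t| → (∑ j, |a j + s * bb j|) = (∑ j, |a j|) + s * c := by
        intro s hs
        rw [hcdef, Finset.mul_sum, ← Finset.sum_add_distrib]
        refine Finset.sum_congr rfl fun j _ => ?_
        have hsb : |s * bb j| ≤ |a j| := by
          rw [abs_mul]
          calc |s| * |bb j| ≤ |t| * |bb j| := by gcongr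
            _ = |t * bb j| := (abs_mul _ _).symm
            _ ≤ |a j| := hkey j
        rw [abs_add_eq hsb]; ring
      have hLs : ∀ s : ℝ, |s| ≤ |t| →
          lassoObj Φ D y lam (x + s • h) = lassoObj Φ D y lam x + lam * (s * c) := by
        intro s hs
        have hexp := lassoObj_expand Φ D y lam x (s • h)
        have hΦs : Φ.mulVec (s • h) = 0 := by rw [Matrix.mulVec_smul, hΦh, smul_zero]
        have hdot : Φᵀ.mulVec (Φ.mulVec x - y) ⬝ᵥ (s • h) = 0 := by
          rw [dotProduct_comm, dot_transpose, hΦs, zero_dotProduct]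
        have hquad : (1/2) * ∑ i, (Φ.mulVec (s • h) i)^2 = 0 := by
          rw [hΦs]; simp
        have hDs : ∀ j, Dᵀ.mulVec (x + s • h) j = a j + s * bb j := fun j => by
          rw [Matrix.mulVec_add, Pi.add_apply, Matrix.mulVec_smul, Pi.smul_apply, smul_eq_mul]
        have hsum1 : (∑ j, |Dᵀ.mulVec (x + s • h) j|) = ∑ j, |a j + s * bb j| :=
          Finset.sum_congr rfl fun j _ => by rw [hDs j]
        rw [hexp, hdot, hquad, hsum1, hF s hs]
        have hax : (∑ j, |a j|) = ∑ j, |Dᵀ.mulVec x j| := rfl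
        rw [hax]; ring
      have hajs : a js ≠ 0 := fun h0 => hbbjs (hbbJ js h0)
      have h1 := hx (x + t • h)
      rw [hLs t le_rfl] at h1
      have h2 := hx (x + (-t) • h)
      rw [hLs (-t) (by rw [abs_neg])] at h2
      have hc0 : lam * (t * c) = 0 := by nlinarith
      have hsol' : IsLassoSol Φ D y lam (x + t • h) := by
        have hLeq : lassoObj Φ D y lam (x + t • h) = lassoObj Φ D y lam x := by
          rw [hLs t le_rfl, hc0, add_zero]
        intro x'
        rw [hLeq]
        exact hx x'
      refine ih (x + t • h) hsol' ?_
      have hDt : ∀ j, Dᵀ.mulVec (x + t • h) j = a j + t * bb j := fun j => by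
        rw [Matrix.mulVec_add, Pi.add_apply, Matrix.mulVec_smul, Pi.smul_apply, smul_eq_mul]
      have hsub : (Finset.univ.filter fun j => Dᵀ.mulVec (x + t • h) j ≠ 0) ⊆
          (Finset.univ.filter fun j => a j ≠ 0).erase js := by
        intro j hj
        rw [Finset.mem_filter] at hj
        rw [Finset.mem_erase, Finset.mem_filter]
        constructor
        · intro hjeq
          apply hj.2
          rw [hjeq, hDt js, htdef]
          field_simp
          ring
        · refine ⟨Finset.mem_univ _, fun h0 => ?_⟩
          apply hj.2
          rw [hDt j, h0, hbbJ j h0, mul_zero, add_zero]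
      have hmemjs : js ∈ (Finset.univ.filter fun j => a j ≠ 0) :=
        Finset.mem_filter.2 ⟨Finset.mem_univ js, hajs⟩
      have hcard1 := Finset.card_le_card hsub
      have hcard2 := Finset.card_erase_of_mem hmemjs
      have hcard3 : 0 < (Finset.univ.filter fun j => a j ≠ 0).card :=
        Finset.card_pos.2 ⟨js, hmemjs⟩
      omega

end LassoAux4

namespace LassoAux5

open Matrix Set LassoAux LassoAux2 LassoAux3 LassoAux4

variable {N Q P : ℕ} {Φ : Matrix (Fin Q) (Fin N) ℝ} {D : Matrix (Fin N) (Fin P) ℝ}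
  {lam : ℝ}

theorem mulVec_pi_sum {m n : ℕ} (M : Matrix (Fin m) (Fin n) ℝ) (z : Fin n → ℝ) :
    M.mulVec z = ∑ q, z q • M.mulVec (fun j => if q = j then 1 else 0) := by
  conv_lhs => rw [pi_eq_sum_univ z]
  simp only [← Matrix.mulVecLin_apply, map_sum, _root_.map_smul]

theorem local_affine (hlam : 0 < lam) {AJ : Set (Fin P) → Matrix (Fin N) (Fin N) ℝ}
    (hAJ : IsAJChoice Φ D AJ) {y : Fin Q → ℝ}
    (hyT : (y, lam) ∉ transitionSpace Φ D AJ)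
    {x : Fin N → ℝ} (hx : IsLassoSol Φ D y lam x)
    (hJ : HJcond Φ D {j | Dᵀ.mulVec x j = 0}) :
    ∃ ε > 0, ∀ ybar : Fin Q → ℝ, dist ybar y < ε →
      ∃ xbar, IsLassoSol Φ D ybar lam xbar ∧
        Φ.mulVec xbar = Φ.mulVec x +
          (Φ * AJ {j | Dᵀ.mulVec x j = 0} * Φᵀ).mulVec (ybar - y) := by
  classical
  set J : Set (Fin P) := {j | Dᵀ.mulVec x j = 0} with hJdef
  obtain ⟨r, U, hU, hAJeq⟩ := hAJ J hJ
  set A := AJ J with hAdef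
  obtain ⟨u, hueq, hu1, hu2⟩ := cert_of_sol hlam hx
  have ha : ∀ j, (j ∈ J ↔ Dᵀ.mulVec x j = 0) := fun j => Iff.rfl
  -- sign decomposition
  set s : Fin P → ℝ := fun i => if Dᵀ.mulVec x i = 0 then 0 else u i with hs
  set σten : Fin P → ℝ := fun i => if Dᵀ.mulVec x i = 0 ∧ |u i| = 1 then u i else 0 with hσ
  set w' : Fin P → ℝ := fun i => if Dᵀ.mulVec x i = 0 ∧ |u i| ≠ 1 then u i else 0 with hw'
  have hsval : ∀ i, s i = if Dᵀ.mulVec x i = 0 then 0 else u i := fun i => rfl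
  have hσval : ∀ i, σten i = if Dᵀ.mulVec x i = 0 ∧ |u i| = 1 then u i else 0 := fun i => rfl
  have hw'val : ∀ i, w' i = if Dᵀ.mulVec x i = 0 ∧ |u i| ≠ 1 then u i else 0 := fun i => rfl
  have husum : u = s + σten + w' := by
    funext i
    rw [Pi.add_apply, Pi.add_apply, hsval, hσval, hw'val]
    by_cases h1 : Dᵀ.mulVec x i = 0 <;> by_cases h2 : |u i| = 1 <;>
      simp [h1, h2]
  set K : Set (Fin P) := {i | Dᵀ.mulVec x i = 0 ∧ |u i| = 1} with hK
  have hKJ : K ⊆ J := fun i hi => hi.1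
  have hxG : x ∈ GJ D J := fun j hj => hj
  -- A facts
  have hAmem : ∀ w, A.mulVec w ∈ GJ D J := by
    intro w; rw [hAJeq]; exact AJmat_mem_GJ hU w
  have hAid : ∀ xx ∈ GJ D J, A.mulVec (Φᵀ.mulVec (Φ.mulVec xx)) = xx := by
    intro xx hxx; rw [hAJeq]; exact AJmat_id hJ hU hxx
  have hAperp : ∀ w, (∀ g ∈ GJ D J, w ⬝ᵥ g = 0) → A.mulVec w = 0 := by
    intro w hw; rw [hAJeq]; exact AJmat_perp hU hw
  -- decompose D u
  have hDu : D.mulVec u = D.mulVec s + D.mulVec σten + D.mulVec w' := by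
    conv_lhs => rw [husum]
    rw [Matrix.mulVec_add, Matrix.mulVec_add]
  have hX1 : Φᵀ.mulVec (Φ.mulVec x) = Φᵀ.mulVec y - lam • D.mulVec s
      - lam • D.mulVec σten - lam • D.mulVec w' := by
    have h0 : Φᵀ.mulVec (Φ.mulVec x) - Φᵀ.mulVec y + lam • D.mulVec u = 0 := by
      rw [← Matrix.mulVec_sub]; exact hueq
    rw [hDu, smul_add, smul_add] at h0
    rw [← sub_eq_zero]
    rw [show Φᵀ.mulVec (Φ.mulVec x) - (Φᵀ.mulVec y - lam • D.mulVec s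
        - lam • D.mulVec σten - lam • D.mulVec w')
      = Φᵀ.mulVec (Φ.mulVec x) - Φᵀ.mulVec y
        + (lam • D.mulVec s + lam • D.mulVec σten + lam • D.mulVec w') from by abel]
    exact h0
  -- x = A (Φᵀ y − lam D s)
  have hsuppσw : ∀ i, i ∉ J → (σten + w') i = 0 := by
    intro i hi
    have hia : ¬ (Dᵀ.mulVec x i = 0) := hi
    rw [Pi.add_apply, hσval, hw'val, if_neg (by tauto), if_neg (by tauto), add_zero]
  have hperpσw : ∀ g ∈ GJ D J, (D.mulVec (σten + w')) ⬝ᵥ g = 0 := fun g hg =>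
    dot_Dsupp J _ hsuppσw hg
  have hAv : A.mulVec (Φᵀ.mulVec y - lam • D.mulVec s) = x := by
    have h1 : A.mulVec (Φᵀ.mulVec (Φ.mulVec x)) = x := hAid x hxG
    have h2 : Φᵀ.mulVec (Φ.mulVec x) = (Φᵀ.mulVec y - lam • D.mulVec s)
        - lam • D.mulVec (σten + w') := by
      rw [hX1, Matrix.mulVec_add, smul_add]; abel
    rw [h2] at h1
    rw [Matrix.mulVec_sub, Matrix.mulVec_smul] at h1
    rw [hAperp (D.mulVec (σten + w')) hperpσw] at h1
    rw [smul_zero, sub_zero] at h1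
    exact h1
  -- Pi-tilde expansion
  have hPiz : ∀ z, (Φᵀ * (Φ * A * Φᵀ - 1)).mulVec z
      = Φᵀ.mulVec (Φ.mulVec (A.mulVec (Φᵀ.mulVec z))) - Φᵀ.mulVec z := by
    intro z
    rw [← Matrix.mulVec_mulVec, Matrix.sub_mulVec, Matrix.one_mulVec, Matrix.mulVec_sub,
      ← Matrix.mulVec_mulVec, ← Matrix.mulVec_mulVec]
  -- the key identity giving membership in the transition set
  have hAΦy : A.mulVec (Φᵀ.mulVec y) = x + lam • A.mulVec (D.mulVec s) := by
    have h1 : Φᵀ.mulVec y = (Φᵀ.mulVec y - lam • D.mulVec s) + lam • D.mulVec s := by abel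
    rw [h1, Matrix.mulVec_add, Matrix.mulVec_smul, hAv]
  have hclaim2 : (Φᵀ * (Φ * A * Φᵀ - 1)).mulVec y
      - lam • ((Φᵀ * Φ * A - 1).mulVec (D.mulVec s) - D.mulVec σten)
      = -(lam • D.mulVec w') := by
    have e3 : (Φᵀ * Φ * A - 1).mulVec (D.mulVec s)
        = Φᵀ.mulVec (Φ.mulVec (A.mulVec (D.mulVec s))) - D.mulVec s := by
      rw [Matrix.sub_mulVec, Matrix.one_mulVec, ← Matrix.mulVec_mulVec, ← Matrix.mulVec_mulVec]
    rw [hPiz y, hAΦy, e3, Matrix.mulVec_add, Matrix.mulVec_add, Matrix.mulVec_smul,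
      Matrix.mulVec_smul, hX1, smul_sub, smul_sub]
    abel
  -- range inclusion from not being in the transition space
  have husign : ∀ i, Dᵀ.mulVec x i ≠ 0 → u i = 1 ∨ u i = -1 := by
    intro i hi
    have h2 := hu2 i
    rcases lt_or_gt_of_ne hi with h' | h'
    · right
      have : u i * Dᵀ.mulVec x i = -1 * Dᵀ.mulVec x i := by
        rw [h2, abs_of_neg h']; ring
      exact mul_right_cancel₀ hi this
    · left
      have : u i * Dᵀ.mulVec x i = 1 * Dᵀ.mulVec x i := by
        rw [h2, abs_of_pos h']; ring
      exact mul_right_cancel₀ hi this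
  have hsuppw' : ∀ i, i ∉ J \ K → w' i = 0 := by
    intro i hi
    rw [hw'val]
    rw [Set.mem_diff] at hi
    push_neg at hi
    by_cases hiJ : Dᵀ.mulVec x i = 0
    · have hiK : i ∈ K := hi hiJ
      have : |u i| = 1 := hiK.2
      rw [if_neg (by tauto)]
    · rw [if_neg (by tauto)]
  have hrange : Set.range (Φᵀ * (Φ * A * Φᵀ - 1)).mulVec ⊆ colSpan D (J \ K) := by
    by_contra hnr
    apply hyT
    refine ⟨hlam.le, J, K, s, σten, hJ, hKJ, hnr, ?_, ?_, ?_, ?_, ?_⟩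
    · intro i hi
      have hia : Dᵀ.mulVec x i ≠ 0 := hi
      rw [hsval, if_neg hia]
      exact husign i hia
    · intro i hi
      have hi' : Dᵀ.mulVec x i = 0 := hi
      rw [hsval, if_pos hi']
    · intro i hi
      have hi' : Dᵀ.mulVec x i = 0 ∧ |u i| = 1 := hi
      rw [hσval, if_pos hi']
      rcases (abs_eq (by norm_num : (0:ℝ) ≤ 1)).1 hi'.2 with h | h
      · exact Or.inl h
      · exact Or.inr h
    · intro i hi
      have hi' : ¬(Dᵀ.mulVec x i = 0 ∧ |u i| = 1) := hi
      rw [hσval, if_neg hi']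
    · refine projG_eq_of _ fun g hg => ?_
      have hdiff : (Φᵀ * (Φ * A * Φᵀ - 1)).mulVec y
          - lam • ((Φᵀ * Φ * A - 1).mulVec (D.mulVec s) - D.mulVec σten)
          = -(lam • D.mulVec w') := hclaim2
      rw [hdiff]
      rw [neg_dotProduct, smul_dotProduct, smul_eq_mul]
      rw [dot_Dsupp (J \ K) w' hsuppw' hg, mul_zero, neg_zero]
  -- build the linear section B of D over J \ K
  have hcol : ∀ q : Fin Q, ∃ vq : Fin P → ℝ, (∀ i, i ∉ J \ K → vq i = 0) ∧
      (Φᵀ * (Φ * A * Φᵀ - 1)).mulVec (fun j => if q = j then 1 else 0) = D.mulVec vq := by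
    intro q
    obtain ⟨vq, h1, h2⟩ := hrange ⟨(fun j => if q = j then (1:ℝ) else 0), rfl⟩
    exact ⟨vq, h1, h2⟩
  choose vv hvv1 hvv2 using hcol
  set Vmat : Matrix (Fin P) (Fin Q) ℝ := Matrix.of (fun i q => vv q i) with hVmat
  have hVapp : ∀ z i, Vmat.mulVec z i = ∑ q, z q * vv q i := by
    intro z i
    simp [hVmat, Matrix.mulVec, dotProduct, mul_comm]
  have hVsum : ∀ z : Fin Q → ℝ, Vmat.mulVec z = ∑ q, z q • vv q := by
    intro z
    funext i
    rw [hVapp, Finset.sum_apply]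
    refine Finset.sum_congr rfl fun q _ => ?_
    rw [Pi.smul_apply, smul_eq_mul]
  have hDB : ∀ z, D.mulVec (Vmat.mulVec z) = (Φᵀ * (Φ * A * Φᵀ - 1)).mulVec z := by
    intro z
    rw [mulVec_pi_sum (Φᵀ * (Φ * A * Φᵀ - 1)) z, hVsum]
    rw [show D.mulVec (∑ q, z q • vv q) = ∑ q, z q • D.mulVec (vv q) from by
      simp only [← Matrix.mulVecLin_apply, map_sum, _root_.map_smul]]
    exact Finset.sum_congr rfl fun q _ => by rw [hvv2 q]
  have hBsupp : ∀ z i, i ∉ J \ K → Vmat.mulVec z i = 0 := by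
    intro z i hi
    rw [hVapp]
    exact Finset.sum_eq_zero fun q _ => by rw [hvv1 q i hi, mul_zero]
  obtain ⟨CB, hCB0, hCBb⟩ := mulVec_bound Vmat
  obtain ⟨C1, hC10, hC1b⟩ := mulVec_bound (Dᵀ * A * Φᵀ)
  have hM1 : ∀ z, Dᵀ.mulVec (A.mulVec (Φᵀ.mulVec z)) = (Dᵀ * A * Φᵀ).mulVec z := by
    intro z
    rw [Matrix.mulVec_mulVec, Matrix.mulVec_mulVec]
  -- margins
  obtain ⟨δ1, hδ10, hδ1le⟩ := exists_pos_le (fun i => Dᵀ.mulVec x i = 0 ∧ |u i| ≠ 1)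
    (fun i => 1 - |u i|) (fun i hi => by
      show (0:ℝ) < 1 - |u i|
      have h1 := hu1 i
      rcases lt_or_eq_of_le h1 with h | h
      · linarith
      · exact absurd h hi.2)
  obtain ⟨δ2, hδ20, hδ2le⟩ := exists_pos_le (fun i => Dᵀ.mulVec x i ≠ 0)
    (fun i => |Dᵀ.mulVec x i|) (fun i hi => abs_pos.2 hi)
  refine ⟨min (δ2 / (C1 + 1)) (lam * δ1 / (CB + 1)), lt_min (by positivity) (by positivity),
    fun ybar hdist => ?_⟩
  set z := ybar - y with hzdef
  have hznorm : ‖z‖ < min (δ2 / (C1 + 1)) (lam * δ1 / (CB + 1)) := by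
    rw [hzdef, ← dist_eq_norm]; exact hdist
  have hz1 : C1 * ‖z‖ ≤ δ2 := by
    have h1 : ‖z‖ ≤ δ2 / (C1 + 1) := le_of_lt (lt_of_lt_of_le hznorm (min_le_left _ _))
    have h2 : ‖z‖ * (C1 + 1) ≤ δ2 := by
      rw [← le_div_iff₀ (by positivity)]; exact h1
    nlinarith [norm_nonneg z]
  have hz2 : lam⁻¹ * (CB * ‖z‖) ≤ δ1 := by
    have h1 : ‖z‖ ≤ lam * δ1 / (CB + 1) := le_of_lt (lt_of_lt_of_le hznorm (min_le_right _ _))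
    have h2 : ‖z‖ * (CB + 1) ≤ lam * δ1 := by
      rw [← le_div_iff₀ (by positivity)]; exact h1
    have h3 : CB * ‖z‖ ≤ lam * δ1 := by nlinarith [norm_nonneg z]
    have h4 := mul_le_mul_of_nonneg_left h3 (inv_nonneg.2 hlam.le)
    have h5 : lam⁻¹ * (lam * δ1) = δ1 := by field_simp
    linarith [h4, h5, (by ring : lam⁻¹ * (CB * ‖z‖) = lam⁻¹ * CB * ‖z‖)]
  set xbar := x + A.mulVec (Φᵀ.mulVec z) with hxbar
  set ubar := u - lam⁻¹ • Vmat.mulVec z with hubar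
  -- cosupport stability on J
  have hDxbar : ∀ i, Dᵀ.mulVec xbar i = Dᵀ.mulVec x i + (Dᵀ * A * Φᵀ).mulVec z i := by
    intro i
    rw [hxbar, Matrix.mulVec_add, Pi.add_apply, hM1]
  have hDxbarJ : ∀ i, Dᵀ.mulVec x i = 0 → Dᵀ.mulVec xbar i = 0 := by
    intro i hi
    rw [hDxbar, hi, zero_add, ← hM1]
    exact hAmem (Φᵀ.mulVec z) i hi
  have hubarval : ∀ i, ubar i = u i - lam⁻¹ * Vmat.mulVec z i := by
    intro i
    rw [hubar, Pi.sub_apply, Pi.smul_apply, smul_eq_mul]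
  have hubar_eq : ∀ i, i ∉ J \ K → ubar i = u i := by
    intro i hi
    rw [hubarval, hBsupp z i hi, mul_zero, sub_zero]
  refine ⟨xbar, ?_, ?_⟩
  · refine sol_of_cert hlam xbar ubar ?_ ?_ ?_
    · -- stationarity
      have h1 : Φᵀ.mulVec (Φ.mulVec xbar - ybar) = Φᵀ.mulVec (Φ.mulVec x - y)
          + (Φᵀ.mulVec (Φ.mulVec (A.mulVec (Φᵀ.mulVec z))) - Φᵀ.mulVec z) := by
        rw [show Φ.mulVec xbar - ybar
            = (Φ.mulVec x - y) + (Φ.mulVec (A.mulVec (Φᵀ.mulVec z)) - z) from by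
          rw [hxbar, Matrix.mulVec_add, hzdef]; abel]
        rw [Matrix.mulVec_add, Matrix.mulVec_sub, Matrix.mulVec_sub]
      have h2 : lam • D.mulVec ubar = lam • D.mulVec u
          - (Φᵀ.mulVec (Φ.mulVec (A.mulVec (Φᵀ.mulVec z))) - Φᵀ.mulVec z) := by
        rw [hubar, Matrix.mulVec_sub, Matrix.mulVec_smul, hDB, hPiz z, smul_sub, smul_smul,
          mul_inv_cancel₀ hlam.ne', one_smul]
      rw [h1, h2]
      rw [show Φᵀ.mulVec (Φ.mulVec x - y)
          + (Φᵀ.mulVec (Φ.mulVec (A.mulVec (Φᵀ.mulVec z))) - Φᵀ.mulVec z)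
          + (lam • D.mulVec u
            - (Φᵀ.mulVec (Φ.mulVec (A.mulVec (Φᵀ.mulVec z))) - Φᵀ.mulVec z))
          = Φᵀ.mulVec (Φ.mulVec x - y) + lam • D.mulVec u from by abel]
      exact hueq
    · -- bounds
      intro i
      by_cases hi : i ∈ J \ K
      · have hi1 : Dᵀ.mulVec x i = 0 := hi.1
        have hi2 : |u i| ≠ 1 := fun h => hi.2 ⟨hi.1, h⟩
        have hb := hCBb z i
        have hδ := hδ1le i ⟨hi1, hi2⟩
        rw [hubarval]
        calc |u i - lam⁻¹ * Vmat.mulVec z i| ≤ |u i| + |lam⁻¹ * Vmat.mulVec z i| := by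
              exact abs_sub _ _
          _ = |u i| + lam⁻¹ * |Vmat.mulVec z i| := by
              rw [abs_mul, abs_of_nonneg (inv_nonneg.2 hlam.le)]
          _ ≤ |u i| + lam⁻¹ * (CB * ‖z‖) := by
              have := mul_le_mul_of_nonneg_left hb (inv_nonneg.2 hlam.le)
              linarith
          _ ≤ |u i| + δ1 := by linarith
          _ ≤ 1 := by linarith
      · rw [hubar_eq i hi]
        exact hu1 i
    · -- sign condition
      intro i
      by_cases hi : Dᵀ.mulVec x i = 0
      · rw [hDxbarJ i hi, mul_zero, abs_zero]
      · have hiJ : i ∉ J := hi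
        have hiJK : i ∉ J \ K := fun h => hiJ h.1
        rw [hubar_eq i hiJK, hDxbar]
        have hb := hC1b z i
        have hδ := hδ2le i hi
        exact sign_mul_eq (hu2 i) hi (by
          calc |(Dᵀ * A * Φᵀ).mulVec z i| ≤ C1 * ‖z‖ := hb
            _ ≤ δ2 := hz1
            _ ≤ |Dᵀ.mulVec x i| := hδ)
  · rw [hxbar, Matrix.mulVec_add]
    congr 1
    rw [← Matrix.mulVec_mulVec, ← Matrix.mulVec_mulVec]

end LassoAux5

open LassoAux LassoAux2 LassoAux3 LassoAux4 LassoAux5 in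
/-- The prediction map `y ↦ μ_λ(y)` is `C^∞` on the open set `ℝ^Q ∖ H_{·,λ}`; around any
`y ∉ H_{·,λ}` it coincides with the affine map `ȳ ↦ μ_λ(y) + Φ A^[J] Φ*(ȳ − y)` where `J`
is the cosupport (satisfying `(H_J)`) of a solution, and its Jacobian at `y` is `Φ A^[J] Φ*`. -/
theorem lasso_prediction_smooth
    {N Q P : ℕ} (hN : 0 < N) (hQ : 0 < Q) (hP : 0 < P)
    (Φ : Matrix (Fin Q) (Fin N) ℝ) (D : Matrix (Fin N) (Fin P) ℝ)
    (hH0 : ∀ x : Fin N → ℝ, Φ.mulVec x = 0 → Dᵀ.mulVec x = 0 → x = 0)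
    (AJ : Set (Fin P) → Matrix (Fin N) (Fin N) ℝ) (hAJ : IsAJChoice Φ D AJ)
    (lam : ℝ) (hlam : 0 < lam)
    (mu : (Fin Q → ℝ) → (Fin Q → ℝ))
    (hmu : ∀ y x, IsLassoSol Φ D y lam x → mu y = Φ.mulVec x) :
    IsOpen {y : Fin Q → ℝ | (y, lam) ∉ transitionSpace Φ D AJ} ∧
    ContDiffOn ℝ (⊤ : ℕ∞) mu {y : Fin Q → ℝ | (y, lam) ∉ transitionSpace Φ D AJ} ∧
    ∀ y : Fin Q → ℝ, (y, lam) ∉ transitionSpace Φ D AJ →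
      ∀ x : Fin N → ℝ, IsLassoSol Φ D y lam x →
        HJcond Φ D {j | Dᵀ.mulVec x j = 0} →
          (∃ ε > 0, ∀ ybar : Fin Q → ℝ, dist ybar y < ε →
            mu ybar = mu y
              + (Φ * AJ {j | Dᵀ.mulVec x j = 0} * Φᵀ).mulVec (ybar - y)) ∧
          HasFDerivAt mu
            (LinearMap.toContinuousLinearMap
              (Φ * AJ {j | Dᵀ.mulVec x j = 0} * Φᵀ).mulVecLin) y := by
  classical
  -- the local affine description of `mu`
  have mainloc : ∀ y : Fin Q → ℝ, (y, lam) ∉ transitionSpace Φ D AJ →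
      ∀ x : Fin N → ℝ, IsLassoSol Φ D y lam x →
        HJcond Φ D {j | Dᵀ.mulVec x j = 0} →
        ∃ ε > 0, ∀ ybar : Fin Q → ℝ, dist ybar y < ε →
          mu ybar = mu y + (Φ * AJ {j | Dᵀ.mulVec x j = 0} * Φᵀ).mulVec (ybar - y) := by
    intro y hyT x hx hJ
    obtain ⟨ε, hε, hloc⟩ := local_affine hlam hAJ hyT hx hJ
    refine ⟨ε, hε, fun ybar hyb => ?_⟩
    obtain ⟨xbar, hxsol, hxΦ⟩ := hloc ybar hyb
    rw [hmu ybar xbar hxsol, hxΦ, ← hmu y x hx]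
  -- derivative of an affine map
  have haffFD : ∀ (c : Fin Q → ℝ) (M : Matrix (Fin Q) (Fin Q) ℝ) (y : Fin Q → ℝ),
      HasFDerivAt (fun ybar => c + M.mulVec (ybar - y))
        (LinearMap.toContinuousLinearMap M.mulVecLin) y := by
    intro c M y
    have hLco : ⇑(LinearMap.toContinuousLinearMap M.mulVecLin) = fun v => M.mulVec v := by
      funext v
      simp [Matrix.mulVecLin_apply]
    have h3 : HasFDerivAt (fun ybar : Fin Q → ℝ => M.mulVec ybar)
        (LinearMap.toContinuousLinearMap M.mulVecLin) y := by
      have h4 := (LinearMap.toContinuousLinearMap M.mulVecLin).hasFDerivAt (x := y)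
      rwa [hLco] at h4
    have h2 := h3.const_add (c - M.mulVec y)
    have h4 : (fun ybar => c + M.mulVec (ybar - y))
        = fun ybar => (c - M.mulVec y) + M.mulVec ybar := by
      funext ybar
      rw [Matrix.mulVec_sub]
      abel
    rw [h4]
    exact h2
  have haffCD : ∀ (c : Fin Q → ℝ) (M : Matrix (Fin Q) (Fin Q) ℝ) (y : Fin Q → ℝ),
      ContDiffAt ℝ (⊤ : ℕ∞) (fun ybar => c + M.mulVec (ybar - y)) y := by
    intro c M y
    have hLco : ⇑(LinearMap.toContinuousLinearMap M.mulVecLin) = fun v => M.mulVec v := by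
      funext v
      simp [Matrix.mulVecLin_apply]
    have h1 : ContDiff ℝ (⊤ : ℕ∞) (fun ybar : Fin Q → ℝ => M.mulVec (ybar - y)) := by
      have h2 := (LinearMap.toContinuousLinearMap M.mulVecLin).contDiff (n := (⊤ : ℕ∞))
      rw [hLco] at h2
      exact h2.comp (contDiff_id.sub contDiff_const)
    exact (contDiff_const.add h1).contDiffAt
  refine ⟨?_, ?_, ?_⟩
  · -- openness
    rw [show {y : Fin Q → ℝ | (y, lam) ∉ transitionSpace Φ D AJ}
        = {y : Fin Q → ℝ | (y, lam) ∈ transitionSpace Φ D AJ}ᶜ from rfl,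
      isOpen_compl_iff]
    set X := Set (Fin P) × Set (Fin P) × (Fin P → ℝ) × (Fin P → ℝ) with hX
    set A0 : Set X := {q | HJcond Φ D q.1 ∧ q.2.1 ⊆ q.1 ∧
      ¬ (Set.range (Φᵀ * (Φ * AJ q.1 * Φᵀ - 1)).mulVec ⊆ colSpan D (q.1 \ q.2.1)) ∧
      (∀ i, i ∉ q.1 → q.2.2.1 i = 1 ∨ q.2.2.1 i = -1) ∧ (∀ i ∈ q.1, q.2.2.1 i = 0) ∧
      (∀ i ∈ q.2.1, q.2.2.2 i = 1 ∨ q.2.2.2 i = -1) ∧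
      (∀ i, i ∉ q.2.1 → q.2.2.2 i = 0)} with hA0
    set E : X → Set (Fin Q → ℝ) := fun q =>
      {y | projG (GJ D (q.1 \ q.2.1)) ((Φᵀ * (Φ * AJ q.1 * Φᵀ - 1)).mulVec y)
        = projG (GJ D (q.1 \ q.2.1))
            (lam • ((Φᵀ * Φ * AJ q.1 - 1).mulVec (D.mulVec q.2.2.1)
              - D.mulVec q.2.2.2))} with hE
    have hBadEq : {y : Fin Q → ℝ | (y, lam) ∈ transitionSpace Φ D AJ} = ⋃ q ∈ A0, E q := by
      ext y
      simp only [Set.mem_setOf_eq, Set.mem_iUnion]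
      constructor
      · rintro ⟨-, J, K, s, σ, h1, h2, h3, h4, h5, h6, h7, h8⟩
        exact ⟨(J, K, s, σ), ⟨h1, h2, h3, h4, h5, h6, h7⟩, h8⟩
      · rintro ⟨⟨J, K, s, σ⟩, ⟨h1, h2, h3, h4, h5, h6, h7⟩, h8⟩
        exact ⟨hlam.le, J, K, s, σ, h1, h2, h3, h4, h5, h6, h7, h8⟩
    rw [hBadEq]
    have h3fin : ({-1, 0, 1} : Set ℝ).Finite :=
      (Set.finite_singleton 1).insert 0 |>.insert (-1)
    have hS3 : {s : Fin P → ℝ | ∀ i, s i ∈ ({-1, 0, 1} : Set ℝ)}.Finite := by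
      refine (Set.Finite.pi fun _ : Fin P => h3fin).subset ?_
      intro s hs
      rw [Set.mem_univ_pi]
      exact fun i => hs i
    have hA0fin : A0.Finite := by
      refine Set.Finite.subset (Set.Finite.prod Set.finite_univ
        (Set.Finite.prod Set.finite_univ (Set.Finite.prod hS3 hS3))) ?_
      rintro ⟨J, K, s, σ⟩ hq
      obtain ⟨h1, h2, h3, h4, h5, h6, h7⟩ := hq
      refine ⟨Set.mem_univ _, Set.mem_univ _, ?_, ?_⟩
      · intro i
        by_cases hi : i ∈ J
        · rw [h5 i hi]; simp
        · rcases h4 i hi with h | h <;> rw [h] <;> simp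
      · intro i
        by_cases hi : i ∈ K
        · rcases h6 i hi with h | h <;> rw [h] <;> simp
        · rw [h7 i hi]; simp
    refine hA0fin.isClosed_biUnion fun q _ => ?_
    exact isClosed_eq ((projG_continuous _).comp (continuous_mulVec _)) continuous_const
  · -- smoothness
    intro y hy
    obtain ⟨x, hx, hJ⟩ := exists_good_sol hN hH0 hlam y
    obtain ⟨ε, hε, hloc⟩ := mainloc y hy x hx hJ
    have hev : mu =ᶠ[nhds y] fun ybar =>
        mu y + (Φ * AJ {j | Dᵀ.mulVec x j = 0} * Φᵀ).mulVec (ybar - y) :=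
      Metric.eventually_nhds_iff.2 ⟨ε, hε, fun ybar hyb => hloc ybar hyb⟩
    exact ((haffCD (mu y) (Φ * AJ {j | Dᵀ.mulVec x j = 0} * Φᵀ) y).congr_of_eventuallyEq
      hev).contDiffWithinAt
  · -- local affine formula and Jacobian
    intro y hy x hx hJ
    obtain ⟨ε, hε, hloc⟩ := mainloc y hy x hx hJ
    refine ⟨⟨ε, hε, hloc⟩, ?_⟩
    have hev : mu =ᶠ[nhds y] fun ybar =>
        mu y + (Φ * AJ {j | Dᵀ.mulVec x j = 0} * Φᵀ).mulVec (ybar - y) :=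
      Metric.eventually_nhds_iff.2 ⟨ε, hε, fun ybar hyb => hloc ybar hyb⟩
    exact (haffFD (mu y) (Φ * AJ {j | Dᵀ.mulVec x j = 0} * Φᵀ) y).congr_of_eventuallyEq hev
end

section
/- Let J ⊆ {1,…,P} satisfy (H_J). Then the matrix V = Φ A^[J] Φ* is the orthogonal projector of ℝ^Q onto the subspace Φ(G_J), and tr(V) = dim(G_J). -/
open Matrix MeasureTheory ProbabilityTheory

/-!
Put `B = Φ U`. Since the columns of `U` are a basis of `G_J` and `Φ` is injective on `G_J`, the
matrix `B` has independent columns and range `Φ(G_J)`, so `Bᵀ B` is invertible and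
`V = B (Bᵀ B)⁻¹ Bᵀ`. Then `V` maps into the range of `B`, and `Bᵀ V = Bᵀ` says that `v - V v` is
orthogonal to that range: `V` is the orthogonal projector onto `Φ(G_J)`. Cycling the trace gives
`tr V = tr ((Bᵀ B)⁻¹ Bᵀ B) = r = dim G_J`.
-/

noncomputable def projMat {m n : Type*} [Fintype m] [Fintype n] [DecidableEq n]
    (B : Matrix m n ℝ) : Matrix m m ℝ :=
  B * (Bᵀ * B)⁻¹ * Bᵀ

section projMat

variable {m n : Type*} [Fintype m] [Fintype n] [DecidableEq n] {B : Matrix m n ℝ}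

theorem isUnit_det_transpose_mul_self (hB : Function.Injective B.mulVec) :
    IsUnit (Bᵀ * B).det := by
  rw [← isUnit_iff_isUnit_det, ← mulVec_injective_iff_isUnit, ← coe_mulVecLin,
    ← LinearMap.ker_eq_bot, ker_mulVecLin_transpose_mul_self, LinearMap.ker_eq_bot]
  exact hB

theorem transpose_mul_projMat (hB : Function.Injective B.mulVec) :
    Bᵀ * projMat B = Bᵀ := by
  rw [projMat, ← Matrix.mul_assoc, ← Matrix.mul_assoc,
    mul_nonsing_inv _ (isUnit_det_transpose_mul_self hB), Matrix.one_mul]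

theorem trace_projMat (hB : Function.Injective B.mulVec) :
    (projMat B).trace = Fintype.card n := by
  rw [projMat, trace_mul_comm, ← Matrix.mul_assoc,
    mul_nonsing_inv _ (isUnit_det_transpose_mul_self hB), trace_one]

end projMat

theorem projG_eq_of_mem_of_dotProduct_eq_zero {n : ℕ} {G : Submodule ℝ (Fin n → ℝ)}
    {v w : Fin n → ℝ} (hw : w ∈ G) (horth : ∀ x ∈ G, (v - w) ⬝ᵥ x = 0) :
    projG G v = w := by
  let e := EuclideanSpace.equiv (Fin n) ℝ
  have hinner : ∀ x y : Fin n → ℝ, inner ℝ (e.symm x) (e.symm y) = x ⬝ᵥ y := fun x y => by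
    simp [e, dotProduct, PiLp.inner_apply, mul_comm]
  rw [projG, ← e.apply_symm_apply w]
  congr 1
  refine Submodule.eq_starProjection_of_mem_of_inner_eq_zero (Submodule.mem_map_of_mem hw) ?_
  rintro _ ⟨x, hx, rfl⟩
  rw [← map_sub]
  exact (hinner _ _).trans (horth x hx)

theorem projG_range_eq_projMat_mulVec {q : ℕ} {n : Type*} [Fintype n] [DecidableEq n]
    {B : Matrix (Fin q) n ℝ} (hB : Function.Injective B.mulVec) (v : Fin q → ℝ) :
    projG (LinearMap.range B.mulVecLin) v = projMat B *ᵥ v := by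
  refine projG_eq_of_mem_of_dotProduct_eq_zero ⟨(Bᵀ * B)⁻¹ *ᵥ Bᵀ *ᵥ v, ?_⟩ ?_
  · simp only [mulVecLin_apply, projMat, mulVec_mulVec, Matrix.mul_assoc]
  · rintro _ ⟨c, rfl⟩
    rw [mulVecLin_apply, dotProduct_mulVec, ← mulVec_transpose, mulVec_sub, mulVec_mulVec,
      transpose_mul_projMat hB, sub_self, zero_dotProduct]

section ColBasis

variable {N Q r : ℕ} {U : Matrix (Fin N) (Fin r) ℝ} {G : Submodule ℝ (Fin N → ℝ)}

theorem ColBasis.range_mulVecLin (hU : ColBasis U G) : LinearMap.range U.mulVecLin = G :=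
  (Matrix.range_mulVecLin U).trans hU.2

theorem ColBasis.finrank_eq (hU : ColBasis U G) : Module.finrank ℝ G = r := by
  rw [← hU.2, finrank_span_eq_card hU.1, Fintype.card_fin]

theorem ColBasis.range_mul (hU : ColBasis U G) (Φ : Matrix (Fin Q) (Fin N) ℝ) :
    LinearMap.range (Φ * U).mulVecLin = G.map Φ.mulVecLin := by
  rw [mulVecLin_mul, LinearMap.range_comp, hU.range_mulVecLin]

theorem ColBasis.injective_mul_mulVec (hU : ColBasis U G) {Φ : Matrix (Fin Q) (Fin N) ℝ}
    (hΦ : ∀ x, Φ *ᵥ x = 0 → x ∈ G → x = 0) : Function.Injective (Φ * U).mulVec := by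
  rw [← coe_mulVecLin, ← LinearMap.ker_eq_bot, LinearMap.ker_eq_bot']
  intro c hc
  rw [mulVecLin_apply, ← mulVec_mulVec] at hc
  have hUc : U *ᵥ c ∈ G := hU.range_mulVecLin ▸ ⟨c, rfl⟩
  apply mulVec_injective_iff.mpr hU.1
  rw [hΦ _ hc hUc, mulVec_zero]

end ColBasis

theorem mul_AJmat_mul_transpose {N Q r : ℕ} (Φ : Matrix (Fin Q) (Fin N) ℝ)
    (U : Matrix (Fin N) (Fin r) ℝ) : Φ * AJmat Φ U * Φᵀ = projMat (Φ * U) := by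
  simp only [AJmat, projMat, transpose_mul, Matrix.mul_assoc]

theorem AJ_projector_trace_general
    {N Q P : ℕ}
    (Φ : Matrix (Fin Q) (Fin N) ℝ) (D : Matrix (Fin N) (Fin P) ℝ)
    (J : Set (Fin P)) (hHJ : HJcond Φ D J)
    (r : ℕ) (U : Matrix (Fin N) (Fin r) ℝ) (hU : ColBasis U (GJ D J)) :
    (∀ v : Fin Q → ℝ,
        (Φ * AJmat Φ U * Φᵀ).mulVec v
          = projG ((GJ D J).map Φ.mulVecLin) v) ∧
    (Φ * AJmat Φ U * Φᵀ).trace = (Module.finrank ℝ (GJ D J) : ℝ) := by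
  have hB := hU.injective_mul_mulVec hHJ
  rw [mul_AJmat_mul_transpose, ← hU.range_mul, hU.finrank_eq]
  exact ⟨fun v => (projG_range_eq_projMat_mulVec hB v).symm,
    by rw [trace_projMat hB, Fintype.card_fin]⟩

/-- `V = Φ A^[J] Φ*` is the orthogonal projector of `ℝ^Q` onto `Φ(G_J)`, and
`tr(V) = dim(G_J)`. -/
theorem AJ_projector_trace
    {N Q P : ℕ} (hN : 0 < N) (hQ : 0 < Q) (hP : 0 < P)
    (Φ : Matrix (Fin Q) (Fin N) ℝ) (D : Matrix (Fin N) (Fin P) ℝ)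
    (J : Set (Fin P)) (hHJ : HJcond Φ D J)
    (r : ℕ) (U : Matrix (Fin N) (Fin r) ℝ) (hU : ColBasis U (GJ D J)) :
    (∀ v : Fin Q → ℝ,
        (Φ * AJmat Φ U * Φᵀ).mulVec v
          = projG ((GJ D J).map Φ.mulVecLin) v) ∧
    (Φ * AJmat Φ U * Φᵀ).trace = (Module.finrank ℝ (GJ D J) : ℝ) :=
  AJ_projector_trace_general Φ D J hHJ r U hU
end
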